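/- The operator D is self-adjoint with respect to the counting measure on I and positive semidefinite, and there is a universal constant C such that every function φ : I → ℝ satisfies (Σ_{x∈I} φ_x²)^{1/2} ≤ C·[ N^{−1/2}·Σ_{x∈I}|φ_x| + (Σ_{x∈I}|(D^{1/2}φ)_x|²)^{1/6}·(Σ_{x∈I}|φ_x|)^{2/3} ], where D^{1/2} denotes the positive semidefinite square root of D (note Σ_{x∈I}|(D^{1/2}φ)_x|² equals the quadratic form ⟨φ, Dφ⟩). -/

import Mathlib

/-!
Summation by parts writes `⟨Dφ, ψ⟩` as `Σ_{x<N} (φ_{x+1} - φ_x)(ψ_{x+1} - ψ_x)`, which gives the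
symmetry and the positivity of `D`; write `E = ⟨φ, Dφ⟩` and `A = Σ |φ_x|`.
On a window of `L + 1` consecutive sites, `φ` takes somewhere a value of size at most the average
`A / (L + 1)`, and by Cauchy–Schwarz it varies across the window by at most `√(L E)`. Choosing
`L ≈ A / r` with `r³ = A E`, capped at `N`, balances the two terms and gives
`max |φ| ≤ A / (N + 1) + 2 r`; then `Σ φ_x² ≤ max |φ| · A`.
-/

open scoped BigOperators

/-- The nearest-neighbor negative Laplacian with Neumann boundary conditions on
`I = {0,…,N}`, acting on `ℤ`-indexed functions. -/
noncomputable def Dact (N : ℕ) (φ : ℤ → ℝ) (x : ℤ) : ℝ :=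
  if x = 0 then φ 0 - φ 1
  else if x = (N : ℤ) then φ (N : ℤ) - φ ((N : ℤ) - 1)
  else 2 * φ x - φ (x + 1) - φ (x - 1)

open Finset

lemma sum_Ico_zero_natCast {M : Type*} [AddCommMonoid M] (f : ℤ → M) (n : ℕ) :
    ∑ x ∈ Ico (0 : ℤ) n, f x = ∑ i ∈ range n, f i := by
  simp [Int.Ico_eq_finset_map]

lemma sum_Icc_zero_natCast {M : Type*} [AddCommMonoid M] (f : ℤ → M) (n : ℕ) :
    ∑ x ∈ Icc (0 : ℤ) n, f x = ∑ i ∈ range (n + 1), f i := by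
  simp [Int.Icc_eq_finset_map]

section SummationByParts

variable {N : ℕ} (φ ψ : ℤ → ℝ)

lemma Dact_mul_eq_ite_add_ite (hN : N ≠ 0) {x : ℤ} (hx : x ∈ Icc (0 : ℤ) N) :
    Dact N φ x * ψ x = (if x < N then (φ x - φ (x + 1)) * ψ x else 0) +
      (if 0 < x then (φ x - φ (x - 1)) * ψ x else 0) := by
  rw [mem_Icc] at hx
  unfold Dact
  split_ifs <;> first | omega | (subst_vars; ring_nf)

theorem sum_Dact_mul (hN : N ≠ 0) :
    ∑ x ∈ Icc (0 : ℤ) N, Dact N φ x * ψ x =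
      ∑ x ∈ Ico (0 : ℤ) N, (φ (x + 1) - φ x) * (ψ (x + 1) - ψ x) := by
  have hright : (Icc (0 : ℤ) N).filter (· < (N : ℤ)) = Ico 0 (N : ℤ) := by
    ext; simp only [mem_filter, mem_Icc, mem_Ico]; omega
  have hleft : (Icc (0 : ℤ) N).filter (0 < ·) = Ico (0 + 1) ((N : ℤ) + 1) := by
    ext; simp only [mem_filter, mem_Icc, mem_Ico]; omega
  rw [sum_congr rfl fun x hx => Dact_mul_eq_ite_add_ite φ ψ hN hx, sum_add_distrib, ← sum_filter,
    ← sum_filter, hright, hleft, ← sum_Ico_add', ← sum_add_distrib]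
  exact sum_congr rfl fun x _ => by rw [add_sub_cancel_right]; ring

theorem sum_Dact_mul_eq_sum_mul_Dact (hN : N ≠ 0) :
    ∑ x ∈ Icc (0 : ℤ) N, Dact N φ x * ψ x = ∑ x ∈ Icc (0 : ℤ) N, φ x * Dact N ψ x := by
  simp_rw [mul_comm (φ _), sum_Dact_mul φ ψ hN, sum_Dact_mul ψ φ hN, mul_comm]

theorem sum_mul_Dact_self (hN : N ≠ 0) :
    ∑ x ∈ Icc (0 : ℤ) N, φ x * Dact N φ x = ∑ x ∈ Ico (0 : ℤ) N, (φ (x + 1) - φ x) ^ 2 := by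
  simp_rw [mul_comm (φ _), sum_Dact_mul φ φ hN, sq]

end SummationByParts

section Nash

variable (f : ℕ → ℝ)

lemma abs_sub_le_sum_Ico_abs_sub {a b x y : ℕ} (hx : x ∈ Icc a b) (hy : y ∈ Icc a b) :
    |f x - f y| ≤ ∑ i ∈ Ico a b, |f (i + 1) - f i| := by
  wlog hyx : y ≤ x generalizing x y
  · rw [abs_sub_comm]
    exact this hy hx (le_of_not_ge hyx)
  rw [mem_Icc] at hx hy
  rw [← sum_Ico_sub f hyx]
  exact (abs_sum_le_sum_abs _ _).trans
    (sum_le_sum_of_subset_of_nonneg (Ico_subset_Ico hy.1 hx.2) fun _ _ _ => abs_nonneg _)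

lemma abs_le_average_add_sum_Ico_abs_sub {a L x : ℕ} (hx : x ∈ Icc a (a + L)) :
    |f x| ≤ (∑ i ∈ Icc a (a + L), |f i|) / (L + 1) +
      ∑ i ∈ Ico a (a + L), |f (i + 1) - f i| := by
  obtain ⟨y, hy, hfy⟩ : ∃ y ∈ Icc a (a + L), |f y| ≤ (∑ i ∈ Icc a (a + L), |f i|) / (L + 1) := by
    refine exists_le_of_sum_le ⟨x, hx⟩ (le_of_eq ?_)
    rw [sum_const, Nat.card_Icc, show a + L + 1 - a = L + 1 by omega, nsmul_eq_mul]
    push_cast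
    field_simp
  calc |f x| ≤ |f y| + |f x - f y| := by linarith [abs_sub_abs_le_abs_sub (f x) (f y)]
    _ ≤ _ := add_le_add hfy (abs_sub_le_sum_Ico_abs_sub f hx hy)

lemma sum_abs_le_sqrt_card_mul_sum_sq {ι : Type*} (s : Finset ι) (g : ι → ℝ) :
    ∑ i ∈ s, |g i| ≤ √(#s * ∑ i ∈ s, g i ^ 2) := by
  simpa only [sq_abs] using
    Real.le_sqrt_of_sq_le (sq_sum_le_card_mul_sum_sq (s := s) (f := fun i => |g i|))

lemma abs_le_div_add_sqrt_mul_sum_sq {N L x : ℕ} (hL : L ≤ N) (hx : x ≤ N) :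
    |f x| ≤ (∑ i ∈ range (N + 1), |f i|) / (L + 1) +
      √(L * ∑ i ∈ range N, (f (i + 1) - f i) ^ 2) := by
  set a := min x (N - L)
  refine (abs_le_average_add_sum_Ico_abs_sub f (a := a) (L := L)
    (by simp only [mem_Icc]; omega)).trans
    (add_le_add ?_ ?_)
  · gcongr
    intro i
    simp only [mem_Icc, mem_range]
    omega
  refine (sum_abs_le_sqrt_card_mul_sum_sq _ _).trans (Real.sqrt_le_sqrt ?_)
  rw [Nat.card_Ico, Nat.add_sub_cancel_left]
  gcongr
  intro i
  simp only [mem_Ico, mem_range]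
  omega

lemma le_div_add_two_mul_of_forall_le {M A E r : ℝ} {N : ℕ} (hA : 0 < A) (hE : 0 ≤ E)
    (hr : 0 ≤ r) (hr3 : r ^ 3 = A * E) (h : ∀ L : ℕ, L ≤ N → M ≤ A / (L + 1) + √(L * E)) :
    M ≤ A / (N + 1) + 2 * r := by
  have sqrt_le {L : ℝ} (hL : L * r ≤ A) : √(L * E) ≤ r := by
    refine Real.sqrt_le_iff.mpr ⟨hr, ?_⟩
    rcases hr.eq_or_lt with rfl | hr'
    · have : E = 0 := by nlinarith
      simp [this]
    · refine le_of_mul_le_mul_left ?_ hr'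
      nlinarith
  by_cases hNr : N * r ≤ A
  · linarith [h N le_rfl, sqrt_le hNr]
  · have hr' : 0 < r := by
      by_contra! h0
      exact hNr (by nlinarith)
    set L := ⌊A / r⌋₊
    have hLr : L * r ≤ A := (le_div_iff₀ hr').mp (Nat.floor_le (by positivity))
    have hLN : L ≤ N := Nat.floor_le_of_le ((div_le_iff₀ hr').mpr (by linarith))
    have hAL : A / (L + 1) ≤ r :=
      (div_le_iff₀ (by positivity)).mpr ((div_le_iff₀' hr').mp (Nat.lt_floor_add_one _).le)
    linarith [h L hLN, sqrt_le hLr, div_nonneg hA.le (by positivity : (0:ℝ) ≤ N + 1)]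

lemma sum_sq_le_mul_sum_abs {ι : Type*} {s : Finset ι} {g : ι → ℝ} {B : ℝ}
    (h : ∀ i ∈ s, |g i| ≤ B) : ∑ i ∈ s, g i ^ 2 ≤ B * ∑ i ∈ s, |g i| := by
  rw [mul_sum]
  refine sum_le_sum fun i hi => ?_
  rw [← sq_abs, sq]
  exact mul_le_mul_of_nonneg_right (h i hi) (abs_nonneg _)

lemma abs_le_div_add_two_mul {N x : ℕ} (hx : x ≤ N) {r : ℝ} (hr : 0 ≤ r)
    (hr3 : r ^ 3 = (∑ i ∈ range (N + 1), |f i|) * ∑ i ∈ range N, (f (i + 1) - f i) ^ 2) :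
    |f x| ≤ (∑ i ∈ range (N + 1), |f i|) / (N + 1) + 2 * r := by
  rcases (sum_nonneg fun i _ => abs_nonneg (f i) : 0 ≤ ∑ i ∈ range (N + 1), |f i|).eq_or_lt
    with hA | hA
  · have := single_le_sum (fun i _ => abs_nonneg (f i)) (mem_range.mpr (Nat.lt_succ_of_le hx))
    rw [← hA] at this ⊢
    exact this.trans (by positivity)
  · exact le_div_add_two_mul_of_forall_le hA (sum_nonneg fun i _ => sq_nonneg _) hr hr3
      fun L hL => abs_le_div_add_sqrt_mul_sum_sq f hL hx

end Nash

theorem nash_inequality {N : ℕ} (hN : N ≠ 0) (φ : ℤ → ℝ) :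
    (∑ x ∈ Icc (0 : ℤ) N, φ x ^ 2) ^ ((1 : ℝ) / 2) ≤
      2 * ((N : ℝ) ^ (-(1 / 2 : ℝ)) * ∑ x ∈ Icc (0 : ℤ) N, |φ x| +
        (∑ x ∈ Icc (0 : ℤ) N, φ x * Dact N φ x) ^ ((1 : ℝ) / 6) *
          (∑ x ∈ Icc (0 : ℤ) N, |φ x|) ^ ((2 : ℝ) / 3)) := by
  rw [sum_mul_Dact_self φ hN, sum_Ico_zero_natCast, sum_Icc_zero_natCast, sum_Icc_zero_natCast]
  set A := ∑ i ∈ range (N + 1), |φ i|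
  set E := ∑ i ∈ range N, (φ (i + 1) - φ i) ^ 2
  have hA : 0 ≤ A := sum_nonneg fun i _ => abs_nonneg _
  have hE : 0 ≤ E := sum_nonneg fun i _ => sq_nonneg _
  set r := E ^ (1 / 3 : ℝ) * A ^ (1 / 3 : ℝ)
  have hr3 : r ^ 3 = A * E := by
    rw [mul_pow, one_div, ← Nat.cast_ofNat, Real.rpow_inv_natCast_pow hE (by norm_num),
      Real.rpow_inv_natCast_pow hA (by norm_num), mul_comm]
  have hS : ∑ i ∈ range (N + 1), φ i ^ 2 ≤ (A / (N + 1) + 2 * r) * A :=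
    sum_sq_le_mul_sum_abs fun i hi => abs_le_div_add_two_mul (fun i : ℕ => φ i)
      (Nat.le_of_lt_succ (mem_range.mp hi)) (by positivity) (by simpa using hr3)
  set u := (N : ℝ) ^ (-(1 / 2 : ℝ)) * A
  set v := E ^ (1 / 6 : ℝ) * A ^ (2 / 3 : ℝ)
  have hu : A / (N + 1) * A ≤ u ^ 2 := by
    have hN' : (0 : ℝ) < N := by positivity
    rw [mul_pow, ← Real.rpow_natCast, ← Real.rpow_mul hN'.le,
      show -(1 / 2 : ℝ) * (2 : ℕ) = -1 by norm_num, Real.rpow_neg_one, div_mul_eq_mul_div, ← sq,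
      div_eq_inv_mul _ ((N : ℝ) + 1)]
    gcongr
    linarith
  have hv : r * A = v ^ 2 := by
    simp only [r, v, mul_pow, ← Real.rpow_natCast, ← Real.rpow_mul hE, ← Real.rpow_mul hA]
    rw [mul_assoc, ← Real.rpow_add_one' hA (by norm_num)]
    norm_num
  rw [← Real.sqrt_eq_rpow, Real.sqrt_le_left (by positivity)]
  nlinarith [mul_nonneg (by positivity : 0 ≤ u) (by positivity : 0 ≤ v)]

/-- `D` is self-adjoint for the counting measure on `I`, positive semidefinite, and
the Nash-type inequality
`(Σ φ²)^{1/2} ≤ C·[N^{−1/2}·Σ|φ| + ⟨φ, Dφ⟩^{1/6}·(Σ|φ|)^{2/3}]`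
holds with a universal constant `C` (here `⟨φ, Dφ⟩ = Σ_{x∈I}|(D^{1/2}φ)_x|²` is the
quadratic form of `D`). -/
theorem neumann_laplacian_nash_inequality :
    (∀ N : ℕ, 2 ≤ N → ∀ φ ψ : ℤ → ℝ,
        ∑ x ∈ Finset.Icc (0 : ℤ) (N : ℤ), Dact N φ x * ψ x =
          ∑ x ∈ Finset.Icc (0 : ℤ) (N : ℤ), φ x * Dact N ψ x) ∧
    (∀ N : ℕ, 2 ≤ N → ∀ φ : ℤ → ℝ,
        0 ≤ ∑ x ∈ Finset.Icc (0 : ℤ) (N : ℤ), φ x * Dact N φ x) ∧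
    (∃ C : ℝ, 0 < C ∧ ∀ N : ℕ, 2 ≤ N → ∀ φ : ℤ → ℝ,
        (∑ x ∈ Finset.Icc (0 : ℤ) (N : ℤ), (φ x) ^ 2) ^ ((1 : ℝ) / 2) ≤
          C * ((N : ℝ) ^ (-(1 / 2 : ℝ)) * ∑ x ∈ Finset.Icc (0 : ℤ) (N : ℤ), |φ x| +
            (∑ x ∈ Finset.Icc (0 : ℤ) (N : ℤ), φ x * Dact N φ x) ^ ((1 : ℝ) / 6) *
              (∑ x ∈ Finset.Icc (0 : ℤ) (N : ℤ), |φ x|) ^ ((2 : ℝ) / 3))) := by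
  refine ⟨fun N hN φ ψ => sum_Dact_mul_eq_sum_mul_Dact φ ψ (by omega),
    fun N hN φ => ?_, 2, two_pos, fun N hN => nash_inequality (by omega)⟩
  rw [sum_mul_Dact_self φ (by omega)]
  exact sum_nonneg fun x _ => sq_nonneg _
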